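/- For every real z > 0, the function x ↦ x · d/dx( ψ(xz + 1) - log(xz) ) = xz ψ'(xz+1) - 1 tends to -1 as x → 0+ and is asymptotic to -1/(2xz) as x → ∞; consequently, for every p with 1 < p ≤ 2 it belongs to L^p(0, ∞). -/

import Mathlib

open Real MeasureTheory Filter

/-- The digamma function `ψ = Γ'/Γ`. -/
noncomputable def digamma (x : ℝ) : ℝ := deriv Real.Gamma x / Real.Gamma x

/-- The trigamma function `ψ'`. -/
noncomputable def trigamma (x : ℝ) : ℝ := deriv digamma x

/-!
On `(0, ∞)` the digamma function `ψ` and the series `S(x) = ∑ₙ (1/(n+1) - 1/(x+n))` are both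
monotone (log-convexity of `Γ`, resp. termwise) and both satisfy `f (x + 1) = f x + 1/x`. As
`1/x → 0`, two such functions differ by a constant, so `ψ' = S' = ∑ₙ 1/(x+n)²`. Comparing this
series with the telescoping series of `1/((y-½)(y+½))` and, by the trapezoid rule, of
`1/(y(y+1))` gives `1/t + 1/(2t²) ≤ ψ'(t) ≤ 1/(t-½)`, hence
`-(s+2)/(2(s+1)²) ≤ s ψ'(s+1) - 1 ≤ -1/(2s+1)`. Both limits follow by squeezing, and the
majorant `1/(s+1)` has an integrable `p`-th power for `p > 1`; substitute `s = x z`.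
-/

open Set Topology

theorem hasSum_sub_succ_of_antitone {g : ℕ → ℝ} (hg : Antitone g) {l : ℝ}
    (hl : Tendsto g atTop (𝓝 l)) : HasSum (fun n => g n - g (n + 1)) (g 0 - l) := by
  rw [hasSum_iff_tendsto_nat_of_nonneg fun n => sub_nonneg.2 (hg n.le_succ)]
  simp_rw [Finset.sum_range_sub']
  exact tendsto_const_nhds.sub hl

theorem hasSum_one_div_add_sub_one_div_add_succ {a : ℝ} (ha : 0 < a) :
    HasSum (fun n : ℕ => 1 / (a + n) - 1 / (a + n + 1)) (1 / a) := by
  have hanti : Antitone fun n : ℕ => 1 / (a + n) := fun m n hmn =>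
    one_div_le_one_div_of_le (by positivity) (by gcongr)
  have hlim : Tendsto (fun n : ℕ => 1 / (a + n)) atTop (𝓝 0) :=
    tendsto_const_nhds.div_atTop (tendsto_atTop_add_const_left _ a tendsto_natCast_atTop_atTop)
  simpa [add_assoc] using hasSum_sub_succ_of_antitone hanti hlim

theorem summable_one_div_add_sq (x : ℝ) : Summable fun n : ℕ => 1 / (x + n) ^ 2 := by
  have := (Real.summable_one_div_nat_add_rpow x 2).2 one_lt_two
  simpa [add_comm, sq_abs] using this

theorem tsum_one_div_add_sq_le {x : ℝ} (hx : 1 / 2 < x) :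
    ∑' n : ℕ, 1 / (x + n) ^ 2 ≤ 1 / (x - 1 / 2) := by
  refine hasSum_le (fun n => ?_) (summable_one_div_add_sq x).hasSum
    (hasSum_one_div_add_sub_one_div_add_succ (by linarith))
  have : 0 < x - 1 / 2 + n := by positivity
  rw [div_sub_div _ _ this.ne' (by positivity), div_le_div_iff₀ (by positivity) (by positivity)]
  nlinarith

theorem le_tsum_one_div_add_sq {x : ℝ} (hx : 0 < x) :
    1 / x + 1 / (2 * x ^ 2) ≤ ∑' n : ℕ, 1 / (x + n) ^ 2 := by
  set T := ∑' n : ℕ, 1 / (x + n) ^ 2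
  have hT : HasSum (fun n : ℕ => 1 / (x + n) ^ 2) T := (summable_one_div_add_sq x).hasSum
  have hT₁ : HasSum (fun n : ℕ => 1 / (x + n + 1) ^ 2) (T - 1 / x ^ 2) := by
    simpa [add_assoc] using (hasSum_nat_add_iff' 1).2 hT
  -- the trapezoid rule overestimates the integral of the convex function `1 / y ^ 2`
  have := hasSum_le (fun n : ℕ => ?_) (hasSum_one_div_add_sub_one_div_add_succ hx)
    ((hT.add hT₁).div_const 2)
  · have : 1 / (2 * x ^ 2) = 1 / x ^ 2 / 2 := by ring
    linarith
  have : 0 < x + n := by positivity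
  rw [div_sub_div _ _ this.ne' (by positivity), div_add_div _ _ (by positivity) (by positivity),
    div_div, div_le_div_iff₀ (by positivity) (by positivity)]
  nlinarith [sq_nonneg (x + n)]

/-- `ψ(x) + γ`, as a series. -/
noncomputable def digammaSeries (x : ℝ) : ℝ := ∑' n : ℕ, (1 / (n + 1) - 1 / (x + n))

theorem hasDerivAt_one_div_succ_sub_one_div_add (n : ℕ) {y : ℝ} (hy : y + n ≠ 0) :
    HasDerivAt (fun y : ℝ => 1 / (n + 1) - 1 / (y + n)) (1 / (y + n) ^ 2) y := by
  simpa [one_div, neg_div] using (((hasDerivAt_id y).add_const (n : ℝ)).inv hy).const_sub _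

theorem norm_one_div_add_sq_le (n : ℕ) {c y : ℝ} (hc : 0 < c) (hcy : c ≤ y) :
    ‖1 / (y + n) ^ 2‖ ≤ 1 / (c + n) ^ 2 := by
  rw [norm_of_nonneg (by positivity)]
  gcongr

theorem add_natCast_ne_zero_of_mem_Ioi {c y : ℝ} (hc : 0 < c) (hy : y ∈ Ioi c) (n : ℕ) :
    y + n ≠ 0 :=
  (add_pos_of_pos_of_nonneg (hc.trans hy) n.cast_nonneg).ne'

theorem summable_digammaSeries {x : ℝ} (hx : 0 < x) :
    Summable fun n : ℕ => 1 / (n + 1) - 1 / (x + n) := by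
  have hc : 0 < min x 1 / 2 := by positivity
  -- at `x = 1` every term vanishes
  refine summable_of_summable_hasDerivAt_of_isPreconnected (summable_one_div_add_sq _)
    isOpen_Ioi isPreconnected_Ioi
    (fun n y hy => hasDerivAt_one_div_succ_sub_one_div_add n
      (add_natCast_ne_zero_of_mem_Ioi hc hy n))
    (fun n y hy => norm_one_div_add_sq_le n hc (le_of_lt hy)) (y₀ := 1) ?_ (by simp [add_comm]) ?_
  · show min x 1 / 2 < 1
    linarith [min_le_right x 1]
  · show min x 1 / 2 < x
    linarith [min_le_left x 1]

theorem hasDerivAt_digammaSeries {x : ℝ} (hx : 0 < x) :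
    HasDerivAt digammaSeries (∑' n : ℕ, 1 / (x + n) ^ 2) x := by
  have hx2 : 0 < x / 2 := by positivity
  have hx2x : x ∈ Ioi (x / 2) := by simp only [mem_Ioi]; linarith
  exact hasDerivAt_tsum_of_isPreconnected (summable_one_div_add_sq (x / 2)) isOpen_Ioi
    isPreconnected_Ioi
    (fun n y hy => hasDerivAt_one_div_succ_sub_one_div_add n
      (add_natCast_ne_zero_of_mem_Ioi hx2 hy n))
    (fun n y hy => norm_one_div_add_sq_le n hx2 (le_of_lt hy)) hx2x (summable_digammaSeries hx)
    hx2x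

theorem monotoneOn_digammaSeries : MonotoneOn digammaSeries (Ioi 0) := by
  intro a ha b hb hab
  refine Summable.tsum_le_tsum (fun n => ?_) (summable_digammaSeries ha)
    (summable_digammaSeries hb)
  have : (0 : ℝ) < a := ha
  gcongr

theorem digammaSeries_add_one {x : ℝ} (hx : 0 < x) :
    digammaSeries (x + 1) = digammaSeries x + 1 / x := by
  have := (summable_digammaSeries hx).hasSum.add (hasSum_one_div_add_sub_one_div_add_succ hx)
  rw [digammaSeries, digammaSeries, ← this.tsum_eq]
  congr 1 with n
  ring

section MonotoneEqualIncrements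

variable {f g h : ℝ → ℝ} (hf : MonotoneOn f (Ioi 0)) (hg : MonotoneOn g (Ioi 0))
  (hf₁ : ∀ x, 0 < x → f (x + 1) = f x + h x) (hg₁ : ∀ x, 0 < x → g (x + 1) = g x + h x)
  (hh : Tendsto h atTop (𝓝 0))
include hf hg hf₁ hg₁ hh

theorem sub_eq_sub_of_monotoneOn_of_add_one {a b : ℝ} (ha : 0 < a) (hab : a ≤ b)
    (hba : b ≤ a + 1) : f b - g b = f a - g a := by
  have hshift : ∀ n : ℕ, ∀ y, 0 < y → f (y + n) - g (y + n) = f y - g y := by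
    intro n
    induction n with
    | zero => simp
    | succ n ih =>
      intro y hy
      push_cast
      rw [← add_assoc, hf₁ _ (by positivity), hg₁ _ (by positivity), ← ih y hy]
      ring
  -- between `a + n` and `a + n + 1` both `f` and `g` vary by at most `h (a + n)`
  have hclose : ∀ n : ℕ, |(f b - g b) - (f a - g a)| ≤ h (a + n) := by
    intro n
    have ha' : 0 < a + n := by positivity
    have hb' : a + n ≤ b + n := by linarith
    have hb'' : b + n ≤ a + n + 1 := by linarith
    have hmem : ∀ t, a + n ≤ t → t ∈ Ioi (0 : ℝ) := fun t ht => ha'.trans_le ht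
    have hf_lo := hf (hmem _ le_rfl) (hmem _ hb') hb'
    have hf_hi := hf (hmem _ hb') (hmem _ (by linarith)) hb''
    have hg_lo := hg (hmem _ le_rfl) (hmem _ hb') hb'
    have hg_hi := hg (hmem _ hb') (hmem _ (by linarith)) hb''
    rw [← hshift n a ha, ← hshift n b (by linarith), abs_le]
    constructor <;> linarith [hf₁ _ ha', hg₁ _ ha']
  have hlim : Tendsto (fun n : ℕ => h (a + n)) atTop (𝓝 0) :=
    hh.comp (tendsto_atTop_add_const_left _ a tendsto_natCast_atTop_atTop)
  have := abs_nonpos_iff.1 (ge_of_tendsto' hlim hclose)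
  linarith

theorem eventuallyEq_sub_of_monotoneOn_of_add_one {x : ℝ} (hx : 0 < x) :
    (fun y => f y - g y) =ᶠ[𝓝 x] fun _ => f x - g x := by
  filter_upwards [Ioo_mem_nhds (show max (x - 1) 0 < x by simp [hx]) (lt_add_one x)] with y hy
  obtain ⟨hy₁, hy₂⟩ := hy
  rw [max_lt_iff] at hy₁
  rcases le_total x y with hxy | hyx
  · exact sub_eq_sub_of_monotoneOn_of_add_one hf hg hf₁ hg₁ hh hx hxy hy₂.le
  · exact (sub_eq_sub_of_monotoneOn_of_add_one hf hg hf₁ hg₁ hh hy₁.2 hyx (by linarith)).symm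

end MonotoneEqualIncrements

theorem differentiableAt_Gamma_of_pos {x : ℝ} (hx : 0 < x) : DifferentiableAt ℝ Gamma x :=
  differentiableAt_Gamma fun m => by linarith [(m.cast_nonneg : (0 : ℝ) ≤ m)]

theorem digamma_eq_deriv_log_Gamma {x : ℝ} (hx : 0 < x) : digamma x = deriv (log ∘ Gamma) x :=
  ((differentiableAt_Gamma_of_pos hx).hasDerivAt.log (Gamma_pos_of_pos hx).ne').deriv.symm

theorem monotoneOn_digamma : MonotoneOn digamma (Ioi 0) := by
  intro a ha b hb hab
  rw [digamma_eq_deriv_log_Gamma ha, digamma_eq_deriv_log_Gamma hb]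
  exact convexOn_log_Gamma.monotoneOn_deriv (fun x hx =>
    (differentiableAt_Gamma_of_pos hx).log (Gamma_pos_of_pos hx).ne') ha hb hab

theorem digamma_add_one {x : ℝ} (hx : 0 < x) : digamma (x + 1) = digamma x + 1 / x := by
  have hGamma : (Gamma ∘ fun y => y + 1) =ᶠ[𝓝 x] fun y => y * Gamma y := by
    filter_upwards [eventually_gt_nhds hx] with y hy
    exact Gamma_add_one hy.ne'
  have hcomp := logDeriv_comp (g := fun y : ℝ => y + 1) (x := x)
    (differentiableAt_Gamma_of_pos (by positivity)) (differentiableAt_id.add_const 1)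
  rw [(logDeriv_congr_nhds hGamma).eq_of_nhds, logDeriv_mul (f := fun y => y) x hx.ne'
    (Gamma_pos_of_pos hx).ne' differentiableAt_fun_id (differentiableAt_Gamma_of_pos hx)] at hcomp
  simp only [deriv_add_const, deriv_id'', mul_one, logDeriv_id'] at hcomp
  rw [digamma, digamma, ← logDeriv_apply, ← logDeriv_apply, ← hcomp, add_comm]

theorem hasDerivAt_digamma {x : ℝ} (hx : 0 < x) :
    HasDerivAt digamma (∑' n : ℕ, 1 / (x + n) ^ 2) x := by
  have hlim : Tendsto (fun x : ℝ => 1 / x) atTop (𝓝 0) := tendsto_const_nhds.div_atTop tendsto_id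
  have hconst := eventuallyEq_sub_of_monotoneOn_of_add_one monotoneOn_digamma
    monotoneOn_digammaSeries (fun _ => digamma_add_one) (fun _ => digammaSeries_add_one) hlim hx
  refine ((hasDerivAt_digammaSeries hx).add_const
    (digamma x - digammaSeries x)).congr_of_eventuallyEq ?_
  filter_upwards [hconst] with y hy
  linarith

theorem trigamma_eq_tsum {x : ℝ} (hx : 0 < x) : trigamma x = ∑' n : ℕ, 1 / (x + n) ^ 2 :=
  (hasDerivAt_digamma hx).deriv

theorem mul_trigamma_add_one_sub_one_mem_Icc {s : ℝ} (hs : 0 < s) :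
    s * trigamma (s + 1) - 1 ∈ Icc (-((s + 2) / (2 * (s + 1) ^ 2))) (-1 / (2 * s + 1)) := by
  have hlower := le_tsum_one_div_add_sq (by positivity : 0 < s + 1)
  have hupper := tsum_one_div_add_sq_le (by linarith : 1 / 2 < s + 1)
  rw [← trigamma_eq_tsum (by positivity)] at hlower hupper
  constructor
  · calc -((s + 2) / (2 * (s + 1) ^ 2)) = s * (1 / (s + 1) + 1 / (2 * (s + 1) ^ 2)) - 1 := by
          field_simp; ring
      _ ≤ s * trigamma (s + 1) - 1 := by gcongr
  · calc s * trigamma (s + 1) - 1 ≤ s * (1 / (s + 1 - 1 / 2)) - 1 := by gcongr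
      _ = -1 / (2 * s + 1) := by
          rw [show s + 1 - 1 / 2 = (2 * s + 1) / 2 by ring]
          field_simp
          ring

theorem abs_mul_trigamma_add_one_sub_one_le {s : ℝ} (hs : 0 < s) :
    |s * trigamma (s + 1) - 1| ≤ 1 / (s + 1) := by
  obtain ⟨hlower, hupper⟩ := mul_trigamma_add_one_sub_one_mem_Icc hs
  have h₁ : (s + 2) / (2 * (s + 1) ^ 2) ≤ 1 / (s + 1) := by
    rw [div_le_div_iff₀ (by positivity) (by positivity)]; nlinarith
  have h₂ : 0 ≤ 1 / (2 * s + 1) := by positivity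
  rw [abs_le]
  constructor <;> linarith [neg_div (2 * s + 1) 1]

theorem tendsto_mul_trigamma_add_one_sub_one_nhdsGT_zero :
    Tendsto (fun s => s * trigamma (s + 1) - 1) (𝓝[>] 0) (𝓝 (-1)) := by
  have hlim : Tendsto (fun s : ℝ => 2 * s - 1) (𝓝[>] 0) (𝓝 (-1)) :=
    tendsto_nhdsWithin_of_tendsto_nhds <|
      (by fun_prop : Continuous fun s : ℝ => 2 * s - 1).tendsto' 0 (-1) (by norm_num)
  refine tendsto_of_tendsto_of_tendsto_of_le_of_le' tendsto_const_nhds hlim ?_ ?_ <;>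
    filter_upwards [self_mem_nhdsWithin] with s (hs : 0 < s) <;>
    obtain ⟨hlower, hupper⟩ := mul_trigamma_add_one_sub_one_mem_Icc hs
  · have : (s + 2) / (2 * (s + 1) ^ 2) ≤ 1 := by
      rw [div_le_one (by positivity)]; nlinarith
    linarith
  · have : -1 / (2 * s + 1) ≤ 2 * s - 1 := by
      rw [div_le_iff₀ (by positivity)]; nlinarith
    linarith

theorem tendsto_mul_trigamma_add_one_sub_one_div_atTop :
    Tendsto (fun s => (s * trigamma (s + 1) - 1) / (-1 / (2 * s))) atTop (𝓝 1) := by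
  have hlim : Tendsto (fun s : ℝ => 1 - s⁻¹) atTop (𝓝 1) := by
    simpa using tendsto_inv_atTop_zero.const_sub (1 : ℝ)
  refine tendsto_of_tendsto_of_tendsto_of_le_of_le' hlim tendsto_const_nhds ?_ ?_ <;>
    filter_upwards [eventually_gt_atTop 0] with s hs <;>
    obtain ⟨hlower, hupper⟩ := mul_trigamma_add_one_sub_one_mem_Icc hs <;>
    rw [div_div_eq_mul_div, div_neg, div_one]
  · have hmul := mul_le_mul_of_nonneg_right hupper (by positivity : 0 ≤ 2 * s)
    have : 1 - s⁻¹ ≤ -(-1 / (2 * s + 1) * (2 * s)) := by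
      rw [show -(-1 / (2 * s + 1) * (2 * s)) = 1 - 1 / (2 * s + 1) by field_simp; ring,
        inv_eq_one_div]
      gcongr
      linarith
    linarith
  · have hmul := mul_le_mul_of_nonneg_right hlower (by positivity : 0 ≤ 2 * s)
    have : (s + 2) / (2 * (s + 1) ^ 2) * (2 * s) ≤ 1 := by
      rw [div_mul_eq_mul_div, div_le_one (by positivity)]; nlinarith
    linarith

theorem integrableOn_abs_mul_trigamma_add_one_sub_one_rpow {p : ℝ} (hp : 1 < p) :
    IntegrableOn (fun s => |s * trigamma (s + 1) - 1| ^ p) (Ioi 0) := by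
  have hp0 : 0 ≤ p := by linarith
  have htrigamma : Measurable trigamma := measurable_deriv digamma
  refine (integrableOn_add_rpow_Ioi_of_lt (by linarith : -p < -1)
    (by norm_num : -(1 : ℝ) < 0)).mono' (by fun_prop) ?_
  filter_upwards [self_mem_ae_restrict measurableSet_Ioi] with s (hs : 0 < s)
  rw [norm_of_nonneg (by positivity), rpow_neg (by positivity), ← inv_rpow (by positivity),
    ← one_div]
  exact rpow_le_rpow (abs_nonneg _) (abs_mul_trigamma_add_one_sub_one_le hs) hp0

theorem hasDerivAt_digamma_mul_add_one_sub_log {x z : ℝ} (hxz : 0 < x * z) :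
    HasDerivAt (fun y => digamma (y * z + 1) - log (y * z))
      (trigamma (x * z + 1) * z - 1 / x) x := by
  have hx : x ≠ 0 := left_ne_zero_of_mul hxz.ne'
  have hz : z ≠ 0 := right_ne_zero_of_mul hxz.ne'
  have hmul : HasDerivAt (fun y => y * z) z x := by simpa using (hasDerivAt_id x).mul_const z
  have hdigamma := (hasDerivAt_digamma (by positivity : 0 < x * z + 1)).comp x (hmul.add_const 1)
  rw [← trigamma_eq_tsum (by positivity)] at hdigamma
  refine (hdigamma.sub ((hasDerivAt_log hxz.ne').comp x hmul)).congr_deriv ?_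
  field_simp

theorem x_deriv_digamma_Lp (z : ℝ) (hz : 0 < z) :
    (∀ x : ℝ, 0 < x →
      x * deriv (fun y : ℝ => digamma (y * z + 1) - Real.log (y * z)) x
        = x * z * trigamma (x * z + 1) - 1) ∧
    Tendsto (fun x : ℝ =>
        x * deriv (fun y : ℝ => digamma (y * z + 1) - Real.log (y * z)) x)
      (nhdsWithin 0 (Set.Ioi 0)) (nhds (-1)) ∧
    Tendsto (fun x : ℝ =>
        (x * deriv (fun y : ℝ => digamma (y * z + 1) - Real.log (y * z)) x)
          / (-1 / (2 * x * z)))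
      atTop (nhds 1) ∧
    (∀ p : ℝ, 1 < p → p ≤ 2 →
      IntegrableOn
        (fun x : ℝ =>
          |x * deriv (fun y : ℝ => digamma (y * z + 1) - Real.log (y * z)) x| ^ p)
        (Set.Ioi (0 : ℝ))) := by
  have hderiv : ∀ x : ℝ, 0 < x →
      x * deriv (fun y : ℝ => digamma (y * z + 1) - Real.log (y * z)) x
        = x * z * trigamma (x * z + 1) - 1 := fun x hx => by
    rw [(hasDerivAt_digamma_mul_add_one_sub_log (mul_pos hx hz)).deriv]
    field_simp
  refine ⟨hderiv, ?_, ?_, fun p hp _ => ?_⟩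
  · have hscale : Tendsto (fun x => x * z) (𝓝[>] 0) (𝓝[>] 0) :=
      tendsto_nhdsWithin_of_tendsto_nhds_of_eventually_within _
        (by simpa using tendsto_nhdsWithin_of_tendsto_nhds ((continuous_mul_const z).tendsto 0))
        (by filter_upwards [self_mem_nhdsWithin] with x (hx : 0 < x) using mul_pos hx hz)
    refine (tendsto_mul_trigamma_add_one_sub_one_nhdsGT_zero.comp hscale).congr' ?_
    filter_upwards [self_mem_nhdsWithin] with x (hx : 0 < x)
    exact (hderiv x hx).symm
  · refine (tendsto_mul_trigamma_add_one_sub_one_div_atTop.comp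
      (tendsto_id.atTop_mul_const hz)).congr' ?_
    filter_upwards [eventually_gt_atTop 0] with x hx
    simp [hderiv x hx, mul_assoc]
  · refine ((integrableOn_Ioi_comp_mul_right_iff _ 0 hz).2 (by
      simpa using integrableOn_abs_mul_trigamma_add_one_sub_one_rpow hp)).congr_fun
      (fun x (hx : 0 < x) => by simp only [hderiv x hx]) measurableSet_Ioi
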